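/- Let k, ℓ, n be integers with k ≥ 1, ℓ ≥ 1, n ≥ 3, n > k and n > ℓ. Then the loops t ↦ blockdiag(exp(ktJ), exp((n−k)tJ)) and t ↦ blockdiag(exp(ℓtJ), exp((n−ℓ)tJ)), t ∈ [0,2π], are homotopic through positive loops in Sp(4) based at the identity. -/

import Mathlib

open Matrix Set Real

attribute [local instance] Matrix.normedAddCommGroup Matrix.normedSpace

/-- The standard complex structure on `ℝ²`. -/
def J2 : Matrix (Fin 2) (Fin 2) ℝ := !![0, -1; 1, 0]

/-- The block-diagonal complex structure `J₄ = diag(J, J)` on `ℝ⁴`. -/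
def J4 : Matrix (Fin 2 ⊕ Fin 2) (Fin 2 ⊕ Fin 2) ℝ := Matrix.fromBlocks J2 0 0 J2

/-- The 4×4 block-diagonal matrix with 2×2 diagonal blocks `X` and `Y`. -/
def blockDiag2 (X Y : Matrix (Fin 2) (Fin 2) ℝ) :
    Matrix (Fin 2 ⊕ Fin 2) (Fin 2 ⊕ Fin 2) ℝ :=
  Matrix.fromBlocks X 0 0 Y

/-- A positive path in `Sp(4)` (taken w.r.t. `J₄ = diag(J, J)`) on the parameter set
`s`. -/
def IsPosPathJ4 (s : Set ℝ) (A : ℝ → Matrix (Fin 2 ⊕ Fin 2) (Fin 2 ⊕ Fin 2) ℝ) : Prop :=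
  ∀ t ∈ s, (A t)ᵀ * J4 * A t = J4 ∧
    ∃ P : Matrix (Fin 2 ⊕ Fin 2) (Fin 2 ⊕ Fin 2) ℝ, P.IsSymm ∧ P.PosDef ∧
      HasDerivWithinAt A (J4 * P * A t) s t

/-- A positive loop in `Sp(4)` (w.r.t. `J₄ = diag(J, J)`) based at `K`. -/
noncomputable def PosLoopJ4 (K : Matrix (Fin 2 ⊕ Fin 2) (Fin 2 ⊕ Fin 2) ℝ)
    (A : ℝ → Matrix (Fin 2 ⊕ Fin 2) (Fin 2 ⊕ Fin 2) ℝ) : Prop :=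
  IsPosPathJ4 (Icc 0 (2 * π)) A ∧ A 0 = K ∧ A (2 * π) = K

/-- Two loops in `Sp(4)` (w.r.t. `J₄ = diag(J, J)`) based at `K` are homotopic through
positive loops based at `K`. -/
noncomputable def PosHomotopicJ4 (K : Matrix (Fin 2 ⊕ Fin 2) (Fin 2 ⊕ Fin 2) ℝ)
    (A B : ℝ → Matrix (Fin 2 ⊕ Fin 2) (Fin 2 ⊕ Fin 2) ℝ) : Prop :=
  ∃ H : ℝ → ℝ → Matrix (Fin 2 ⊕ Fin 2) (Fin 2 ⊕ Fin 2) ℝ,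
    ContinuousOn (fun p : ℝ × ℝ => H p.1 p.2) (Icc 0 1 ×ˢ Icc 0 (2 * π)) ∧
    (∀ t ∈ Icc (0 : ℝ) (2 * π), H 0 t = A t ∧ H 1 t = B t) ∧
    (∀ s ∈ Icc (0 : ℝ) 1, H s 0 = K ∧ H s (2 * π) = K) ∧
    (∀ s ∈ Icc (0 : ℝ) 1, IsPosPathJ4 (Icc 0 (2 * π)) (H s))

/-!
All loops involved lie in the maximal torus of `U(2) ⊂ Sp(4)`. Conjugating the factor
`blockdiag(exp(ptJ), exp(qtJ))` of `blockdiag(exp((p+a)tJ), exp((q+b)tJ))` by the rotation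
`rot K4 θ` of the two complex coordinates, `θ ∈ [0, π/2]`, deforms it into
`blockdiag(exp((q+a)tJ), exp((p+b)tJ))`. Each intermediate loop is positive: if `A` is unitary,
`A' = J₄ P A` and `B' = J₄ Q B`, then `(AB)' = J₄ (P + A Q Aᵀ) AB`, which has a positive definite
Hamiltonian as soon as `P ≥ 0` and `Q > 0`. Taking `p - q = k - ℓ` and `a, b ≥ 1` proves the
theorem with a single such deformation.
-/

section Rotation

variable {n : Type*} [DecidableEq n] {J : Matrix n n ℝ}

noncomputable def rot (J : Matrix n n ℝ) (θ : ℝ) : Matrix n n ℝ := cos θ • 1 + sin θ • J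

theorem exp_smul_eq_rot [Fintype n] (hJ : J * J = -1) (θ : ℝ) :
    NormedSpace.exp (θ • J) = rot J θ := by
  let _ : NormedRing (Matrix n n ℝ) := Matrix.linftyOpNormedRing
  let _ : NormedAlgebra ℝ (Matrix n n ℝ) := Matrix.linftyOpNormedAlgebra
  let φ : ℂ →ₐ[ℝ] Matrix n n ℝ := Complex.liftAux J hJ
  have hφ : Continuous φ := φ.toLinearMap.continuous_of_finiteDimensional
  have hθ : θ • J = φ (θ * Complex.I) := by simp [φ, Complex.liftAux_apply]
  have h := NormedSpace.map_exp φ hφ (θ * Complex.I)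
  rw [← Complex.exp_eq_exp_ℂ, Complex.exp_mul_I] at h
  rw [hθ]
  refine h.symm.trans ?_
  simp [φ, Complex.liftAux_apply, rot, Algebra.algebraMap_eq_smul_one, ← Complex.ofReal_cos,
    ← Complex.ofReal_sin]

theorem rot_zero : rot J 0 = 1 := by simp [rot]

theorem rot_add [Fintype n] (hJ : J * J = -1) (α β : ℝ) : rot J (α + β) = rot J α * rot J β := by
  simp only [rot, cos_add, sin_add, add_mul, mul_add, smul_mul_smul, one_mul, mul_one, hJ]
  module

theorem rot_int_mul_two_pi (m : ℤ) : rot J (m * (2 * π)) = 1 := by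
  have hsin : sin (m * (2 * π)) = 0 := by simpa using sin_add_int_mul_two_pi 0 m
  simp [rot, cos_int_mul_two_pi, hsin]

theorem rot_transpose (hJ : Jᵀ = -J) (θ : ℝ) : (rot J θ)ᵀ = rot J (-θ) := by
  simp [rot, hJ, transpose_add, transpose_smul]

theorem rot_transpose_mul_self [Fintype n] (hJ : J * J = -1) (hJt : Jᵀ = -J) (θ : ℝ) :
    (rot J θ)ᵀ * rot J θ = 1 := by
  rw [rot_transpose hJt, ← rot_add hJ, neg_add_cancel, rot_zero]

theorem Commute.rot [Fintype n] {X : Matrix n n ℝ} (h : Commute X J) (θ : ℝ) :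
    Commute X (rot J θ) :=
  ((Commute.one_right X).smul_right _).add_right (h.smul_right _)

theorem continuous_rot : Continuous (rot J) := by
  unfold rot; fun_prop

theorem hasDerivAt_rot_mul [Fintype n] (hJ : J * J = -1) (c t : ℝ) :
    HasDerivAt (fun s => rot J (c * s)) (c • (J * rot J (c * t))) t := by
  have hc : HasDerivAt (fun s => c * s) c t := by simpa using (hasDerivAt_id t).const_mul c
  refine ((hc.cos.smul_const (1 : Matrix n n ℝ)).add (hc.sin.smul_const J)).congr_deriv ?_
  simp only [rot, mul_add, mul_smul_comm, mul_one, hJ]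
  module

end Rotation

section MatrixCalculus

variable {l m n : Type*} {t : ℝ}

theorem hasDerivAt_matrix_iff [Fintype n] {f : ℝ → Matrix m n ℝ} {f' : Matrix m n ℝ} :
    HasDerivAt f f' t ↔ ∀ i j, HasDerivAt (fun s => f s i j) (f' i j) t := by
  constructor
  · exact fun h i => hasDerivAt_pi.1 (hasDerivAt_pi.1 h i)
  · exact fun h => hasDerivAt_pi.2 fun i => hasDerivAt_pi.2 (h i)

theorem HasDerivAt.matrix_mul [Fintype m] [Fintype n] {f : ℝ → Matrix l m ℝ}
    {g : ℝ → Matrix m n ℝ} {f' : Matrix l m ℝ} {g' : Matrix m n ℝ} (hf : HasDerivAt f f' t)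
    (hg : HasDerivAt g g' t) :
    HasDerivAt (fun s => f s * g s) (f' * g t + f t * g') t := by
  rw [hasDerivAt_matrix_iff] at hf hg ⊢
  intro i j
  simp only [mul_apply, Matrix.add_apply]
  rw [← Finset.sum_add_distrib]
  exact HasDerivAt.fun_sum fun k _ => (hf i k).mul (hg k j)

end MatrixCalculus

local notation "M₂" => Matrix (Fin 2) (Fin 2) ℝ
local notation "M₄" => Matrix (Fin 2 ⊕ Fin 2) (Fin 2 ⊕ Fin 2) ℝ

theorem J2_mul_J2 : J2 * J2 = -1 := by
  ext i j; fin_cases i <;> fin_cases j <;> simp [J2]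

theorem J2_transpose : J2ᵀ = -J2 := by
  ext i j; fin_cases i <;> fin_cases j <;> simp [J2]

theorem J4_eq_blockDiag2 : J4 = blockDiag2 J2 J2 := rfl

theorem blockDiag2_mul (X Y X' Y' : M₂) :
    blockDiag2 X Y * blockDiag2 X' Y' = blockDiag2 (X * X') (Y * Y') := by
  simp [blockDiag2, fromBlocks_multiply]

theorem blockDiag2_transpose (X Y : M₂) : (blockDiag2 X Y)ᵀ = blockDiag2 Xᵀ Yᵀ := by
  simp [blockDiag2, fromBlocks_transpose]

theorem blockDiag2_one : blockDiag2 1 1 = 1 := fromBlocks_one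

theorem blockDiag2_smul_one (a b : ℝ) :
    blockDiag2 (a • 1) (b • 1) = Matrix.diagonal (Sum.elim (fun _ => a) fun _ => b) := by
  simp [blockDiag2, smul_one_eq_diagonal, fromBlocks_diagonal]

theorem posDef_blockDiag2_smul_one {a b : ℝ} (ha : 0 < a) (hb : 0 < b) :
    (blockDiag2 (a • 1) (b • 1)).PosDef := by
  rw [blockDiag2_smul_one, posDef_diagonal_iff]
  rintro (i | i) <;> assumption

theorem posSemidef_blockDiag2_smul_one {a b : ℝ} (ha : 0 ≤ a) (hb : 0 ≤ b) :
    (blockDiag2 (a • 1) (b • 1)).PosSemidef := by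
  rw [blockDiag2_smul_one, posSemidef_diagonal_iff]
  rintro (i | i) <;> assumption

theorem hasDerivAt_blockDiag2 {X Y : ℝ → M₂} {X' Y' : M₂} {t : ℝ} (hX : HasDerivAt X X' t)
    (hY : HasDerivAt Y Y' t) :
    HasDerivAt (fun s => blockDiag2 (X s) (Y s)) (blockDiag2 X' Y') t := by
  rw [hasDerivAt_matrix_iff] at hX hY ⊢
  rintro (i | i) (j | j)
  · exact hX i j
  · exact hasDerivAt_const _ _
  · exact hasDerivAt_const _ _
  · exact hY i j

theorem continuous_blockDiag2 {X Y : ℝ → M₂} (hX : Continuous X) (hY : Continuous Y) :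
    Continuous fun s => blockDiag2 (X s) (Y s) :=
  hX.matrix_fromBlocks continuous_const continuous_const hY

section UnitaryJ4

def unitaryJ4 : Submonoid M₄ :=
  orthogonalGroup (Fin 2 ⊕ Fin 2) ℝ ⊓ Submonoid.centralizer {J4}

theorem mem_unitaryJ4 {A : M₄} : A ∈ unitaryJ4 ↔ Aᵀ * A = 1 ∧ J4 * A = A * J4 := by
  simp [unitaryJ4, mem_orthogonalGroup_iff', Submonoid.mem_centralizer_iff]

variable {A : M₄}

theorem mul_transpose_of_mem_unitaryJ4 (hA : A ∈ unitaryJ4) : A * Aᵀ = 1 :=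
  mul_eq_one_comm.mp (mem_unitaryJ4.mp hA).1

theorem transpose_mem_unitaryJ4 (hA : A ∈ unitaryJ4) : Aᵀ ∈ unitaryJ4 := by
  obtain ⟨hAA, hJA⟩ := mem_unitaryJ4.mp hA
  refine mem_unitaryJ4.mpr ⟨by rw [transpose_transpose, mul_transpose_of_mem_unitaryJ4 hA], ?_⟩
  calc J4 * Aᵀ = Aᵀ * (A * J4) * Aᵀ := by rw [← mul_assoc Aᵀ A, hAA, one_mul]
    _ = Aᵀ * J4 := by rw [← hJA, mul_assoc, mul_assoc, mul_transpose_of_mem_unitaryJ4 hA, mul_one]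

theorem transpose_mul_J4_mul_of_mem_unitaryJ4 (hA : A ∈ unitaryJ4) : Aᵀ * J4 * A = J4 := by
  obtain ⟨hAA, hJA⟩ := mem_unitaryJ4.mp hA
  rw [mul_assoc, hJA, ← mul_assoc, hAA, one_mul]

theorem rot_mem_unitaryJ4 {K : M₄} (hK : K * K = -1) (hKt : Kᵀ = -K) (hJK : Commute J4 K)
    (θ : ℝ) : rot K θ ∈ unitaryJ4 :=
  mem_unitaryJ4.mpr ⟨rot_transpose_mul_self hK hKt θ, hJK.rot θ⟩

theorem blockDiag2_rot_mem_unitaryJ4 (α β : ℝ) :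
    blockDiag2 (rot J2 α) (rot J2 β) ∈ unitaryJ4 := by
  refine mem_unitaryJ4.mpr ⟨?_, ?_⟩
  · rw [blockDiag2_transpose, blockDiag2_mul, rot_transpose_mul_self J2_mul_J2 J2_transpose,
      rot_transpose_mul_self J2_mul_J2 J2_transpose, blockDiag2_one]
  · rw [J4_eq_blockDiag2, blockDiag2_mul, blockDiag2_mul, ((Commute.refl J2).rot α).eq,
      ((Commute.refl J2).rot β).eq]

end UnitaryJ4

section Hamiltonian

variable {A B : ℝ → M₄} {P Q C : M₄} {t : ℝ}

theorem HasDerivAt.conj_of_mem_unitaryJ4 (hC : C ∈ unitaryJ4)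
    (hA : HasDerivAt A (J4 * P * A t) t) :
    HasDerivAt (fun s => C * A s * Cᵀ) (J4 * (C * P * Cᵀ) * (C * A t * Cᵀ)) t := by
  obtain ⟨hCC, hJC⟩ := mem_unitaryJ4.mp hC
  refine (((hasDerivAt_const t C).matrix_mul hA).matrix_mul (hasDerivAt_const t Cᵀ)).congr_deriv ?_
  simp only [zero_mul, zero_add, mul_zero, add_zero, mul_assoc]
  rw [← mul_assoc Cᵀ C, hCC, one_mul, ← mul_assoc C J4, ← hJC, mul_assoc]

theorem HasDerivAt.mul_of_mem_unitaryJ4 (hAt : A t ∈ unitaryJ4)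
    (hA : HasDerivAt A (J4 * P * A t) t) (hB : HasDerivAt B (J4 * Q * B t) t) :
    HasDerivAt (fun s => A s * B s) (J4 * (P + A t * Q * (A t)ᵀ) * (A t * B t)) t := by
  obtain ⟨hAA, hJA⟩ := mem_unitaryJ4.mp hAt
  refine (hA.matrix_mul hB).congr_deriv ?_
  simp only [mul_add, add_mul, mul_assoc]
  rw [← mul_assoc (A t)ᵀ (A t), hAA, one_mul, ← mul_assoc (A t) J4, ← hJA, mul_assoc]

end Hamiltonian

theorem Matrix.PosSemidef.mul_mul_transpose_same {m n : Type*} [Fintype m] [Fintype n]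
    {P : Matrix n n ℝ} (hP : P.PosSemidef) (C : Matrix m n ℝ) : (C * P * Cᵀ).PosSemidef := by
  simpa using hP.mul_mul_conjTranspose_same C

theorem Matrix.PosDef.mul_mul_transpose_same {n : Type*} [Fintype n] [DecidableEq n]
    {P C : Matrix n n ℝ} (hP : P.PosDef) (hC : IsUnit C) : (C * P * Cᵀ).PosDef := by
  simpa using hP.mul_mul_conjTranspose_same (vecMul_injective_iff_isUnit.mpr hC)

theorem isPosPathJ4_of_hasDerivAt {s : Set ℝ} (hU : ∀ t ∈ s, A t ∈ unitaryJ4)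
    (hA : ∀ t ∈ s, ∃ P : M₄, P.PosDef ∧ HasDerivAt A (J4 * P * A t) t) : IsPosPathJ4 s A := by
  intro t ht
  obtain ⟨P, hP, hderiv⟩ := hA t ht
  exact ⟨transpose_mul_J4_mul_of_mem_unitaryJ4 (hU t ht), P, isHermitian_iff_isSymm.mp hP.1, hP,
    hderiv.hasDerivWithinAt⟩

section TorusLoops

noncomputable def diagRot (a b t : ℝ) : M₄ :=
  blockDiag2 (NormedSpace.exp ((a * t) • J2)) (NormedSpace.exp ((b * t) • J2))

variable (a b : ℝ)

theorem diagRot_eq : diagRot a b = fun t => blockDiag2 (rot J2 (a * t)) (rot J2 (b * t)) := by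
  funext t
  simp only [diagRot, exp_smul_eq_rot J2_mul_J2]

theorem diagRot_mem_unitaryJ4 (t : ℝ) : diagRot a b t ∈ unitaryJ4 := by
  rw [diagRot_eq]
  exact blockDiag2_rot_mem_unitaryJ4 _ _

theorem diagRot_mul_diagRot (c d t : ℝ) :
    diagRot a b t * diagRot c d t = diagRot (a + c) (b + d) t := by
  simp only [diagRot_eq, blockDiag2_mul, ← rot_add J2_mul_J2, add_mul]

theorem diagRot_apply_zero : diagRot a b 0 = 1 := by
  simp [diagRot_eq, rot_zero, blockDiag2_one]

theorem diagRot_int_apply_two_pi (m m' : ℤ) : diagRot m m' (2 * π) = 1 := by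
  simp [diagRot_eq, rot_int_mul_two_pi, blockDiag2_one]

theorem continuous_diagRot : Continuous (diagRot a b) := by
  rw [diagRot_eq]
  exact continuous_blockDiag2 (continuous_rot.comp (continuous_const_mul a))
    (continuous_rot.comp (continuous_const_mul b))

theorem hasDerivAt_diagRot (t : ℝ) :
    HasDerivAt (diagRot a b) (J4 * blockDiag2 (a • 1) (b • 1) * diagRot a b t) t := by
  rw [diagRot_eq]
  refine (hasDerivAt_blockDiag2 (hasDerivAt_rot_mul J2_mul_J2 a t)
    (hasDerivAt_rot_mul J2_mul_J2 b t)).congr_deriv ?_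
  simp only [J4_eq_blockDiag2, blockDiag2_mul, mul_smul_comm, mul_one, smul_mul_assoc]

end TorusLoops

def K4 : M₄ := fromBlocks 0 (-1) 1 0

theorem K4_mul_K4 : K4 * K4 = -1 := by
  simp [K4, fromBlocks_multiply, ← fromBlocks_one, fromBlocks_neg]

theorem K4_transpose : K4ᵀ = -K4 := by
  simp [K4, fromBlocks_transpose, fromBlocks_neg]

theorem commute_J4_K4 : Commute J4 K4 := by
  simp [Commute, SemiconjBy, J4, K4, fromBlocks_multiply]

theorem rot_K4_pi_div_two : rot K4 (π / 2) = K4 := by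
  simp [rot]

theorem K4_mul_blockDiag2_mul_K4_transpose (X Y : M₂) :
    K4 * blockDiag2 X Y * K4ᵀ = blockDiag2 Y X := by
  simp [K4, blockDiag2, fromBlocks_transpose, fromBlocks_multiply]

theorem rot_K4_mem_unitaryJ4 (θ : ℝ) : rot K4 θ ∈ unitaryJ4 :=
  rot_mem_unitaryJ4 K4_mul_K4 K4_transpose commute_J4_K4 θ

section SwapHomotopy

noncomputable def swapPath (p q a b θ t : ℝ) : M₄ :=
  rot K4 θ * diagRot p q t * (rot K4 θ)ᵀ * diagRot a b t

variable (p q a b : ℝ)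

theorem swapPath_zero : swapPath p q a b 0 = diagRot (p + a) (q + b) := by
  funext t
  simp [swapPath, rot_zero, diagRot_mul_diagRot]

theorem swapPath_pi_div_two : swapPath p q a b (π / 2) = diagRot (q + a) (p + b) := by
  funext t
  rw [swapPath, rot_K4_pi_div_two, diagRot_eq p q, K4_mul_blockDiag2_mul_K4_transpose,
    ← congrFun (diagRot_eq q p) t, diagRot_mul_diagRot]

theorem swapPath_apply_zero (θ : ℝ) : swapPath p q a b θ 0 = 1 := by
  rw [swapPath, diagRot_apply_zero, diagRot_apply_zero, mul_one, mul_one,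
    mul_transpose_of_mem_unitaryJ4 (rot_K4_mem_unitaryJ4 θ)]

theorem swapPath_int_apply_two_pi (p q a b : ℤ) (θ : ℝ) : swapPath p q a b θ (2 * π) = 1 := by
  rw [swapPath, diagRot_int_apply_two_pi, diagRot_int_apply_two_pi, mul_one, mul_one,
    mul_transpose_of_mem_unitaryJ4 (rot_K4_mem_unitaryJ4 θ)]

theorem continuous_swapPath : Continuous fun x : ℝ × ℝ => swapPath p q a b x.1 x.2 := by
  unfold swapPath
  have hrot : Continuous fun x : ℝ × ℝ => rot K4 x.1 := continuous_rot.comp continuous_fst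
  exact (((hrot.matrix_mul ((continuous_diagRot p q).comp continuous_snd)).matrix_mul
    hrot.matrix_transpose).matrix_mul ((continuous_diagRot a b).comp continuous_snd))

variable {p q a b}

theorem isPosPathJ4_swapPath (hp : 0 ≤ p) (hq : 0 ≤ q) (ha : 0 < a) (hb : 0 < b) (θ : ℝ)
    (s : Set ℝ) : IsPosPathJ4 s (swapPath p q a b θ) := by
  have hC := rot_K4_mem_unitaryJ4 θ
  have hM (t : ℝ) : rot K4 θ * diagRot p q t * (rot K4 θ)ᵀ ∈ unitaryJ4 :=
    mul_mem (mul_mem hC (diagRot_mem_unitaryJ4 p q t)) (transpose_mem_unitaryJ4 hC)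
  refine isPosPathJ4_of_hasDerivAt (fun t _ => mul_mem (hM t) (diagRot_mem_unitaryJ4 a b t))
    fun t _ => ⟨_, ?_, ((hasDerivAt_diagRot p q t).conj_of_mem_unitaryJ4 hC).mul_of_mem_unitaryJ4
      (hM t) (hasDerivAt_diagRot a b t)⟩
  exact PosDef.posSemidef_add ((posSemidef_blockDiag2_smul_one hp hq).mul_mul_transpose_same _)
    ((posDef_blockDiag2_smul_one ha hb).mul_mul_transpose_same (IsUnit.of_mul_eq_one _
      (mul_transpose_of_mem_unitaryJ4 (hM t))))

theorem posHomotopicJ4_diagRot {p q a b : ℤ} (hp : 0 ≤ p) (hq : 0 ≤ q) (ha : 0 < a)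
    (hb : 0 < b) :
    PosHomotopicJ4 1 (diagRot ↑(p + a) ↑(q + b)) (diagRot ↑(q + a) ↑(p + b)) := by
  refine ⟨fun s => swapPath p q a b (s * (π / 2)), ?_, fun t _ => ⟨?_, ?_⟩,
    fun s _ => ⟨swapPath_apply_zero p q a b _, swapPath_int_apply_two_pi p q a b _⟩,
    fun s _ => isPosPathJ4_swapPath (by exact_mod_cast hp) (by exact_mod_cast hq)
      (by exact_mod_cast ha) (by exact_mod_cast hb) _ _⟩
  · have hθ : Continuous fun x : ℝ × ℝ => (x.1 * (π / 2), x.2) := by fun_prop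
    exact ((continuous_swapPath p q a b).comp hθ).continuousOn
  · simp only [zero_mul, swapPath_zero, Int.cast_add]
  · simp only [one_mul, swapPath_pi_div_two, Int.cast_add]

end SwapHomotopy

theorem stmt13_general (k ℓ n : ℤ) (hk : 1 ≤ k) (hl : 1 ≤ ℓ)
    (hnk : k < n) (hnl : ℓ < n) :
    PosHomotopicJ4 1
      (fun t => blockDiag2 (NormedSpace.exp (((k : ℝ) * t) • J2))
        (NormedSpace.exp ((((n : ℝ) - (k : ℝ)) * t) • J2)))
      (fun t => blockDiag2 (NormedSpace.exp (((ℓ : ℝ) * t) • J2))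
        (NormedSpace.exp ((((n : ℝ) - (ℓ : ℝ)) * t) • J2))) := by
  obtain ⟨p, q, a, b, hp, hq, ha, hb, hpa, hqb, hqa, hpb⟩ : ∃ p q a b : ℤ, 0 ≤ p ∧ 0 ≤ q ∧ 0 < a ∧
      0 < b ∧ p + a = k ∧ q + b = n - k ∧ q + a = ℓ ∧ p + b = n - ℓ :=
    ⟨max (k - ℓ) 0, max (ℓ - k) 0, min k ℓ, n - max k ℓ, by omega, by omega, by omega, by omega,
      by omega, by omega, by omega, by omega⟩
  have h := posHomotopicJ4_diagRot hp hq ha hb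
  rw [hpa, hqb, hqa, hpb] at h
  push_cast at h
  exact h

/-- For integers `k, ℓ ≥ 1` and `n ≥ 3` with `n > k`, `n > ℓ`, the loops
`t ↦ blockdiag(exp(ktJ), exp((n-k)tJ))` and `t ↦ blockdiag(exp(ℓtJ), exp((n-ℓ)tJ))`
are homotopic through positive loops in `Sp(4)` based at the identity. -/
theorem stmt13 (k ℓ n : ℤ) (hk : 1 ≤ k) (hl : 1 ≤ ℓ) (hn : 3 ≤ n)
    (hnk : k < n) (hnl : ℓ < n) :
    PosHomotopicJ4 1
      (fun t => blockDiag2 (NormedSpace.exp (((k : ℝ) * t) • J2))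
        (NormedSpace.exp ((((n : ℝ) - (k : ℝ)) * t) • J2)))
      (fun t => blockDiag2 (NormedSpace.exp (((ℓ : ℝ) * t) • J2))
        (NormedSpace.exp ((((n : ℝ) - (ℓ : ℝ)) * t) • J2))) :=
  stmt13_general k ℓ n hk hl hnk hnl
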